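/- arXiv:2404.02023 — 4 statements merged into one kernel-verified Lean document; each statement's English description precedes it below -/
import Mathlib

section
/- Let A_i ∈ ℝ^{n×p} for i ∈ ℕ, θ*, θ₀ ∈ ℝ^p, ε > 0, and for k ≥ 1 let θ_k be the minimizer over θ ∈ ℝ^p of h_{k-1}(θ) + (ε/2)‖θ − θ_{k-1}‖², where h_{k-1}(θ) = ½ Σ_{i=0}^{k-1} ‖A_i(θ − θ*)‖². Suppose the signal is sufficiently exciting: there exist T_s ∈ ℕ and δ > 0 with δ I_p ⪯ Σ_{i=0}^{k-1} A_i^⊤A_i for all k ≥ T_s. Then, writing θ̃_k = θ_k − θ* and η = ε/(δ + ε) ∈ (0,1): (a) ‖θ̃_k‖ ≤ η ‖θ̃_{k-1}‖ for all k ≥ T_s, and (b) ‖θ̃_k‖ ≤ ‖θ̃_{k-1}‖ for all 0 < k < T_s. -/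
open scoped Matrix

open scoped InnerProductSpace

lemma norm_toEuclideanLin_sq {n p : ℕ} (B : Matrix (Fin n) (Fin p) ℝ)
    (u : EuclideanSpace ℝ (Fin p)) :
    ‖Matrix.toEuclideanLin B u‖ ^ 2 =
      (WithLp.equiv 2 _ u) ⬝ᵥ ((Bᵀ * B) *ᵥ (WithLp.equiv 2 _ u)) := by
  set x : Fin p → ℝ := WithLp.equiv 2 _ u
  rw [← real_inner_self_eq_norm_sq, EuclideanSpace.inner_eq_star_dotProduct]
  rw [← Matrix.mulVec_mulVec, Matrix.dotProduct_mulVec x, Matrix.vecMul_transpose]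
  simp [x, Matrix.ofLp_toEuclideanLin_apply]

lemma key_ineq {p : ℕ} {ε : ℝ} (hε : 0 < ε) {S : ℝ}
    (hS : 0 ≤ S) (u w : EuclideanSpace ℝ (Fin p))
    (h : ∀ t : ℝ, 0 < t →
      S + ε * ⟪u - w, u⟫_ℝ ≤ t / 2 * (S + ε * ‖u‖ ^ 2)) :
    S + ε * ‖u‖ ^ 2 ≤ ε * (‖w‖ * ‖u‖) := by
  have hc : 0 ≤ S + ε * ‖u‖ ^ 2 := by positivity
  have hg0 : S + ε * ⟪u - w, u⟫_ℝ ≤ 0 := by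
    by_contra hgt
    push_neg at hgt
    have := h ((S + ε * ⟪u - w, u⟫_ℝ) / (S + ε * ‖u‖ ^ 2 + 1)) (by positivity)
    rw [div_div, div_mul_eq_mul_div, le_div_iff₀ (by positivity)] at this
    nlinarith
  have hinner : ⟪u - w, u⟫_ℝ = ‖u‖ ^ 2 - ⟪w, u⟫_ℝ := by
    rw [inner_sub_left, real_inner_self_eq_norm_sq]
  have hcs : ⟪w, u⟫_ℝ ≤ ‖w‖ * ‖u‖ := real_inner_le_norm w u
  rw [hinner] at hg0
  nlinarith

/-- Parameter contraction of the recursive proximal learning update (Lemma 1,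
first part). If `θ_k` minimizes `½ Σ_{i<k} ‖A_i(θ − θ*)‖² + (ε/2)‖θ − θ_{k-1}‖²` and the
signal is sufficiently exciting (`δ I ⪯ Σ_{i<k} A_iᵀA_i` for all `k ≥ T_s`), then with
`η = ε/(δ+ε) ∈ (0,1)`: `‖θ̃_k‖ ≤ η‖θ̃_{k-1}‖` for `k ≥ T_s` and `‖θ̃_k‖ ≤ ‖θ̃_{k-1}‖` for
`0 < k < T_s`, where `θ̃_k = θ_k − θ*`. -/
theorem rpl_parameter_contraction
    (n p : ℕ) (A : ℕ → Matrix (Fin n) (Fin p) ℝ)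
    (θstar θ0 : EuclideanSpace ℝ (Fin p)) (ε : ℝ) (hε : 0 < ε)
    (θ : ℕ → EuclideanSpace ℝ (Fin p)) (hθ0 : θ 0 = θ0)
    (hmin : ∀ k, 1 ≤ k → ∀ θ' : EuclideanSpace ℝ (Fin p),
      (1 / 2) * ∑ i ∈ Finset.range k, ‖Matrix.toEuclideanLin (A i) (θ k - θstar)‖ ^ 2
          + (ε / 2) * ‖θ k - θ (k - 1)‖ ^ 2 ≤
        (1 / 2) * ∑ i ∈ Finset.range k, ‖Matrix.toEuclideanLin (A i) (θ' - θstar)‖ ^ 2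
          + (ε / 2) * ‖θ' - θ (k - 1)‖ ^ 2)
    (Ts : ℕ) (δ : ℝ) (hδ : 0 < δ)
    (hSE : ∀ k, Ts ≤ k →
      ((∑ i ∈ Finset.range k, (A i)ᵀ * A i) - δ • (1 : Matrix (Fin p) (Fin p) ℝ)).PosSemidef) :
    0 < ε / (δ + ε) ∧ ε / (δ + ε) < 1 ∧
      (∀ k, Ts ≤ k → 1 ≤ k →
        ‖θ k - θstar‖ ≤ (ε / (δ + ε)) * ‖θ (k - 1) - θstar‖) ∧
      (∀ k, 0 < k → k < Ts → ‖θ k - θstar‖ ≤ ‖θ (k - 1) - θstar‖) := by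
  have hδε : 0 < δ + ε := by linarith
  -- the main inequality for any `k ≥ 1`
  have main : ∀ k, 1 ≤ k →
      (∑ i ∈ Finset.range k, ‖Matrix.toEuclideanLin (A i) (θ k - θstar)‖ ^ 2)
        + ε * ‖θ k - θstar‖ ^ 2
        ≤ ε * (‖θ (k - 1) - θstar‖ * ‖θ k - θstar‖) := by
    intro k hk
    set u : EuclideanSpace ℝ (Fin p) := θ k - θstar with hu
    set w : EuclideanSpace ℝ (Fin p) := θ (k - 1) - θstar with hw
    set S : ℝ := ∑ i ∈ Finset.range k, ‖Matrix.toEuclideanLin (A i) u‖ ^ 2 with hSdef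
    have hS : 0 ≤ S := Finset.sum_nonneg fun i _ => by positivity
    refine key_ineq hε hS u w ?_
    intro t ht
    have hmink := hmin k hk (θ k - t • u)
    have hd : θ k - θ (k - 1) = u - w := by rw [hu, hw]; abel
    have h1 : θ k - t • u - θstar = (1 - t) • u := by
      rw [sub_smul, one_smul, hu]; abel
    have h2 : θ k - t • u - θ (k - 1) = (u - w) - t • u := by
      rw [hu, hw]; abel
    rw [h1, h2, hd] at hmink
    have h3 : ∀ i : ℕ, ‖Matrix.toEuclideanLin (A i) ((1 - t) • u)‖ ^ 2
        = (1 - t) ^ 2 * ‖Matrix.toEuclideanLin (A i) u‖ ^ 2 := by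
      intro i
      rw [map_smul, norm_smul, mul_pow, Real.norm_eq_abs, sq_abs]
    simp only [h3, ← Finset.mul_sum, ← hSdef] at hmink
    have h4 : ‖(u - w) - t • u‖ ^ 2
        = ‖u - w‖ ^ 2 - 2 * (t * ⟪u - w, u⟫_ℝ) + t ^ 2 * ‖u‖ ^ 2 := by
      rw [norm_sub_sq_real, real_inner_smul_right, norm_smul, mul_pow,
        Real.norm_eq_abs, sq_abs]
    rw [h4] at hmink
    rw [← mul_le_mul_iff_right₀ ht]
    nlinarith [hmink]
  refine ⟨by positivity, by rw [div_lt_one hδε]; linarith, ?_, ?_⟩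
  · intro k hTs hk
    have hm := main k hk
    -- sufficient excitation gives `δ‖u‖² ≤ S`
    set u : EuclideanSpace ℝ (Fin p) := θ k - θstar with hu
    set x : Fin p → ℝ := WithLp.equiv 2 _ u with hx
    have hx0 := (hSE k hTs).dotProduct_mulVec_nonneg x
    have hsum : ((∑ i ∈ Finset.range k, (A i)ᵀ * A i) *ᵥ x)
        = ∑ i ∈ Finset.range k, ((A i)ᵀ * A i) *ᵥ x := by
      simp only [← Matrix.toLin'_apply, map_sum, LinearMap.coe_sum, Finset.sum_apply]
    have hxx : x ⬝ᵥ x = ‖u‖ ^ 2 := by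
      rw [← real_inner_self_eq_norm_sq, EuclideanSpace.inner_eq_star_dotProduct]
      simp [hx]
    have hdsum : x ⬝ᵥ (∑ i ∈ Finset.range k, ((A i)ᵀ * A i) *ᵥ x)
        = ∑ i ∈ Finset.range k, x ⬝ᵥ (((A i)ᵀ * A i) *ᵥ x) := by
      simp only [dotProduct, Finset.sum_apply, Finset.mul_sum]
      exact Finset.sum_comm
    rw [Matrix.sub_mulVec, Matrix.smul_mulVec, Matrix.one_mulVec,
      dotProduct_sub, hsum] at hx0
    simp only [star_trivial] at hx0
    rw [hdsum] at hx0
    simp only [dotProduct_smul, smul_eq_mul, hxx] at hx0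
    have hSlow : δ * ‖u‖ ^ 2 ≤
        ∑ i ∈ Finset.range k, ‖Matrix.toEuclideanLin (A i) u‖ ^ 2 := by
      have : ∀ i : ℕ, ‖Matrix.toEuclideanLin (A i) u‖ ^ 2
          = x ⬝ᵥ (((A i)ᵀ * A i) *ᵥ x) := fun i => norm_toEuclideanLin_sq (A i) u
      simp only [this]
      linarith
    have hnn : 0 ≤ ‖u‖ := norm_nonneg u
    rcases eq_or_lt_of_le hnn with h0 | h0
    · rw [← h0]
      positivity
    · rw [← mul_le_mul_iff_left₀ h0, div_mul_eq_mul_div, div_mul_eq_mul_div,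
        le_div_iff₀ hδε]
      nlinarith [hm, hSlow]
  · intro k hk0 hkTs
    have hm := main k hk0
    have hS : 0 ≤ ∑ i ∈ Finset.range k, ‖Matrix.toEuclideanLin (A i) (θ k - θstar)‖ ^ 2 :=
      Finset.sum_nonneg fun i _ => by positivity
    have hnn : 0 ≤ ‖θ k - θstar‖ := norm_nonneg _
    rcases eq_or_lt_of_le hnn with h0 | h0
    · rw [← h0]; exact norm_nonneg _
    · rw [← mul_le_mul_iff_left₀ h0]
      nlinarith [hm]
end

section
/- Let c_w, b, L_c > 0, ρ, η ∈ (0,1), T_s, T ∈ ℕ with 1 ≤ T_s < T. Let x, x* : ℕ → ℝ^n with x₀ = x*₀ satisfy ‖x_k − x*_k‖ ≤ c_w Σ_{i=0}^{k-1} ρ^{k-i-1} b ‖θ̃_i‖ for all k ≥ 1, where θ̃ : ℕ → ℝ^p satisfies ‖θ̃_k‖ ≤ ‖θ̃_{k-1}‖ for 0 < k < T_s and ‖θ̃_k‖ ≤ η‖θ̃_{k-1}‖ for k ≥ T_s, and let c : ℝ^n → ℝ satisfy |c(x) − c(y)| ≤ L_c‖x − y‖ for all x, y. Then the regret R_T :=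 Σ_{k=0}^{T-1} (c(x_k) − c(x*_k)) satisfies R_T ≤ c_w b L_c ‖θ̃₀‖ [ T_s/(1−ρ) + (ρ^T + (1−η)ρ + η) / ((1−ρ)²(1−η)) ]. -/
private lemma tri_swap (f : ℕ → ℕ → ℝ) (T : ℕ) :
    ∑ k ∈ Finset.range T, ∑ i ∈ Finset.range k, f k i
      = ∑ i ∈ Finset.range T, ∑ k ∈ Finset.Ico (i+1) T, f k i := by
  induction T with
  | zero => simp
  | succ T ih =>
      rw [Finset.sum_range_succ, ih, Finset.sum_range_succ]
      have h1 : ∀ i ∈ Finset.range T,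
          ∑ k ∈ Finset.Ico (i+1) (T+1), f k i
            = (∑ k ∈ Finset.Ico (i+1) T, f k i) + f T i := by
        intro i hi
        exact Finset.sum_Ico_succ_top (Finset.mem_range.mp hi) _
      rw [Finset.sum_congr rfl h1, Finset.sum_add_distrib]
      simp [add_comm, add_assoc, add_left_comm]

private lemma geom_bound (ρ : ℝ) (hρ0 : 0 ≤ ρ) (hρ1 : ρ < 1) (m : ℕ) :
    ∑ j ∈ Finset.range m, ρ ^ j ≤ 1 / (1 - ρ) := by
  have h1 : (0:ℝ) < 1 - ρ := by linarith
  rw [geom_sum_eq (by linarith : ρ ≠ 1)]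
  have heq : (ρ ^ m - 1) / (ρ - 1) = (1 - ρ ^ m) / (1 - ρ) := by
    rw [div_eq_div_iff (by linarith) (by linarith)]; ring
  rw [heq]
  have hm : (0:ℝ) ≤ ρ ^ m := pow_nonneg hρ0 m
  gcongr
  linarith

/-- First regret bound of Theorem 1 for the RPL adaptive controller: under
the E-δISS deviation bound with `‖w_i‖ ≤ b‖θ̃_i‖`, parameter-error nonexpansiveness before
`T_s` and `η`-contraction after, and an `L_c`-Lipschitz stage cost `c`, the regret
`R_T = Σ_{k<T} (c(x_k) − c(x*_k))` satisfies
`R_T ≤ c_w b L_c ‖θ̃₀‖ [T_s/(1−ρ) + (ρ^T + (1−η)ρ + η)/((1−ρ)²(1−η))]`. -/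
theorem rpl_regret_bound
    (n p : ℕ) (cw b Lc : ℝ) (hcw : 0 < cw) (hb : 0 < b) (hLc : 0 < Lc)
    (ρ η : ℝ) (hρ0 : 0 < ρ) (hρ1 : ρ < 1) (hη0 : 0 < η) (hη1 : η < 1)
    (Ts T : ℕ) (hTs : 1 ≤ Ts) (hT : Ts < T)
    (x xs : ℕ → EuclideanSpace ℝ (Fin n)) (hx0 : x 0 = xs 0)
    (θt : ℕ → EuclideanSpace ℝ (Fin p))
    (hISS : ∀ k, 1 ≤ k → ‖x k - xs k‖ ≤
      cw * ∑ i ∈ Finset.range k, ρ ^ (k - i - 1) * (b * ‖θt i‖))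
    (hθnonexp : ∀ k, 0 < k → k < Ts → ‖θt k‖ ≤ ‖θt (k - 1)‖)
    (hθcontr : ∀ k, Ts ≤ k → ‖θt k‖ ≤ η * ‖θt (k - 1)‖)
    (c : EuclideanSpace ℝ (Fin n) → ℝ)
    (hc : ∀ y z : EuclideanSpace ℝ (Fin n), |c y - c z| ≤ Lc * ‖y - z‖) :
    ∑ k ∈ Finset.range T, (c (x k) - c (xs k)) ≤
      cw * b * Lc * ‖θt 0‖ *
        ((Ts : ℝ) / (1 - ρ) +
          (ρ ^ T + (1 - η) * ρ + η) / ((1 - ρ) ^ 2 * (1 - η))) := by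
  set Θ := ‖θt 0‖ with hΘdef
  have hΘ : 0 ≤ Θ := norm_nonneg _
  have h1ρ : (0:ℝ) < 1 - ρ := by linarith
  have h1η : (0:ℝ) < 1 - η := by linarith
  -- monotone bound
  have hmono : ∀ i, ‖θt i‖ ≤ Θ := by
    intro i
    induction i with
    | zero => exact le_refl _
    | succ i ih =>
        rcases lt_or_ge (i+1) Ts with h | h
        · have := hθnonexp (i+1) (Nat.succ_pos i) h
          simpa using this.trans ih
        · have := hθcontr (i+1) h
          simp only [Nat.add_sub_cancel] at this
          calc ‖θt (i+1)‖ ≤ η * ‖θt i‖ := this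
            _ ≤ 1 * Θ := by
                apply mul_le_mul (le_of_lt hη1) ih (norm_nonneg _) zero_le_one
            _ = Θ := one_mul Θ
  -- geometric bound after Ts
  have hgeo : ∀ i, Ts ≤ i → ‖θt i‖ ≤ η ^ (i - Ts + 1) * Θ := by
    intro i hi
    induction i, hi using Nat.le_induction with
    | base =>
        have := hθcontr Ts le_rfl
        simp only [Nat.sub_self, zero_add, pow_one]
        exact this.trans (by
          apply mul_le_mul_of_nonneg_left (hmono _) (le_of_lt hη0))
    | succ i hi ih =>
        have h := hθcontr (i+1) (le_trans hi (Nat.le_succ i))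
        simp only [Nat.add_sub_cancel] at h
        have : i + 1 - Ts + 1 = (i - Ts + 1) + 1 := by omega
        rw [this, pow_succ']
        calc ‖θt (i+1)‖ ≤ η * ‖θt i‖ := h
          _ ≤ η * (η ^ (i - Ts + 1) * Θ) :=
              mul_le_mul_of_nonneg_left ih (le_of_lt hη0)
          _ = η * η ^ (i - Ts + 1) * Θ := by ring
  -- sum of ‖θt i‖ over range T
  have hS : ∑ i ∈ Finset.range T, ‖θt i‖ ≤ Θ * Ts + Θ * η / (1 - η) := by
    have hsplit : ∑ i ∈ Finset.range T, ‖θt i‖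
        = (∑ i ∈ Finset.range Ts, ‖θt i‖) + ∑ i ∈ Finset.Ico Ts T, ‖θt i‖ := by
      simp only [Finset.range_eq_Ico]
      exact (Finset.sum_Ico_consecutive _ (Nat.zero_le Ts) (le_of_lt hT)).symm
    rw [hsplit]
    have h1 : ∑ i ∈ Finset.range Ts, ‖θt i‖ ≤ Θ * Ts := by
      calc ∑ i ∈ Finset.range Ts, ‖θt i‖ ≤ ∑ _i ∈ Finset.range Ts, Θ :=
            Finset.sum_le_sum fun i _ => hmono i
        _ = Θ * Ts := by simp [mul_comm]
    have h2 : ∑ i ∈ Finset.Ico Ts T, ‖θt i‖ ≤ Θ * η / (1 - η) := by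
      calc ∑ i ∈ Finset.Ico Ts T, ‖θt i‖
          ≤ ∑ i ∈ Finset.Ico Ts T, η ^ (i - Ts + 1) * Θ :=
            Finset.sum_le_sum fun i hi =>
              hgeo i (Finset.mem_Ico.mp hi).1
        _ = ∑ j ∈ Finset.range (T - Ts), η ^ (j + 1) * Θ := by
            rw [Finset.sum_Ico_eq_sum_range]
            apply Finset.sum_congr rfl
            intro j _
            congr 2
            omega
        _ = η * Θ * ∑ j ∈ Finset.range (T - Ts), η ^ j := by
            rw [Finset.mul_sum]
            apply Finset.sum_congr rfl
            intro j _
            ring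
        _ ≤ η * Θ * (1 / (1 - η)) := by
            apply mul_le_mul_of_nonneg_left
              (geom_bound η (le_of_lt hη0) hη1 _)
              (mul_nonneg (le_of_lt hη0) hΘ)
        _ = Θ * η / (1 - η) := by ring
    linarith
  -- main bound
  have hterm : ∀ k ∈ Finset.range T, c (x k) - c (xs k)
      ≤ Lc * ‖x k - xs k‖ :=
    fun k _ => (le_abs_self _).trans (hc _ _)
  have hnorm : ∀ k ∈ Finset.range T, ‖x k - xs k‖
      ≤ cw * ∑ i ∈ Finset.range k, ρ ^ (k - i - 1) * (b * ‖θt i‖) := by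
    intro k _
    rcases Nat.eq_zero_or_pos k with rfl | hk
    · simp [hx0]
    · exact hISS k hk
  have hdouble : ∑ k ∈ Finset.range T, ∑ i ∈ Finset.range k,
      ρ ^ (k - i - 1) * (b * ‖θt i‖)
      ≤ b * (1 / (1 - ρ)) * ∑ i ∈ Finset.range T, ‖θt i‖ := by
    rw [tri_swap]
    rw [Finset.mul_sum]
    apply Finset.sum_le_sum
    intro i _
    calc ∑ k ∈ Finset.Ico (i+1) T, ρ ^ (k - i - 1) * (b * ‖θt i‖)
        = (∑ j ∈ Finset.range (T - (i+1)), ρ ^ j) * (b * ‖θt i‖) := by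
          rw [Finset.sum_Ico_eq_sum_range, Finset.sum_mul]
          apply Finset.sum_congr rfl
          intro j _
          congr 2
          omega
      _ ≤ (1 / (1 - ρ)) * (b * ‖θt i‖) := by
          apply mul_le_mul_of_nonneg_right
            (geom_bound ρ (le_of_lt hρ0) hρ1 _)
            (mul_nonneg (le_of_lt hb) (norm_nonneg _))
      _ = b * (1 / (1 - ρ)) * ‖θt i‖ := by ring
  have key : ∑ k ∈ Finset.range T, (c (x k) - c (xs k))
      ≤ Lc * cw * (b * (1 / (1 - ρ)) * (Θ * Ts + Θ * η / (1 - η))) := by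
    calc ∑ k ∈ Finset.range T, (c (x k) - c (xs k))
        ≤ ∑ k ∈ Finset.range T, Lc * ‖x k - xs k‖ :=
          Finset.sum_le_sum hterm
      _ ≤ ∑ k ∈ Finset.range T, Lc *
            (cw * ∑ i ∈ Finset.range k, ρ ^ (k - i - 1) * (b * ‖θt i‖)) :=
          Finset.sum_le_sum fun k hk =>
            mul_le_mul_of_nonneg_left (hnorm k hk) (le_of_lt hLc)
      _ = Lc * cw * ∑ k ∈ Finset.range T, ∑ i ∈ Finset.range k,
            ρ ^ (k - i - 1) * (b * ‖θt i‖) := by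
          rw [Finset.mul_sum]
          apply Finset.sum_congr rfl
          intro k _
          ring
      _ ≤ Lc * cw * (b * (1 / (1 - ρ)) * ∑ i ∈ Finset.range T, ‖θt i‖) :=
          mul_le_mul_of_nonneg_left hdouble
            (mul_nonneg (le_of_lt hLc) (le_of_lt hcw))
      _ ≤ Lc * cw * (b * (1 / (1 - ρ)) * (Θ * Ts + Θ * η / (1 - η))) := by
          apply mul_le_mul_of_nonneg_left
          · apply mul_le_mul_of_nonneg_left hS
            positivity
          · positivity
  refine key.trans ?_
  have hρT : (0:ℝ) ≤ ρ ^ T := pow_nonneg (le_of_lt hρ0) T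
  have hcomp : η / ((1 - ρ) * (1 - η))
      ≤ (ρ ^ T + (1 - η) * ρ + η) / ((1 - ρ) ^ 2 * (1 - η)) := by
    rw [div_le_div_iff₀ (by positivity) (by positivity)]
    nlinarith [mul_pos hρ0 (mul_pos h1ρ h1η)]
  have hTsnn : (0:ℝ) ≤ (Ts:ℝ) := Nat.cast_nonneg Ts
  have : Lc * cw * (b * (1 / (1 - ρ)) * (Θ * Ts + Θ * η / (1 - η)))
      = cw * b * Lc * Θ * ((Ts:ℝ) / (1 - ρ) + η / ((1 - ρ) * (1 - η))) := by
    field_simp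
  rw [this]
  apply mul_le_mul_of_nonneg_left _ (by positivity)
  exact add_le_add_right hcomp _
end

section
/- Let c_w, c_p, L_c > 0, ρ, γ ∈ (0,1), T_s, T ∈ ℕ with 1 ≤ T_s < T. Let x, x* : ℕ → ℝ^n with x₀ = x*₀ satisfy ‖x_k − x*_k‖ ≤ c_w Σ_{i=0}^{k-1} ρ^{k-i-1} v_i for all k ≥ 1, where v : ℕ → ℝ≥0 satisfies v_i ≤ c_p‖θ̃₀‖ for all i < T_s and v_i ≤ γ^{i−T_s+1} c_p ‖θ̃₀‖ for all i ≥ T_s (with ‖θ̃₀‖ ≥ 0 a given constant), and let c : ℝ^n → ℝ satisfy |c(x) − c(y)| ≤ L_c‖x − y‖ for all x, y. Then the regret R_T := Σ_{k=0}^{T-1} (c(x_k) − c(x*_k)) satisfies R_T ≤ c_w c_p L_c ‖θ̃₀‖ [ T_s/(1−ρ) + (ρ^T + (1−γ)ρ + γ) / ((1−ρ)²(1−γ)) ]. -/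
lemma rpl_geom_sum_le {ρ : ℝ} (h0 : 0 ≤ ρ) (h1 : ρ < 1) (n : ℕ) :
    ∑ j ∈ Finset.range n, ρ ^ j ≤ 1 / (1 - ρ) := by
  have hρ : (0:ℝ) < 1 - ρ := by linarith
  have heq : ∑ j ∈ Finset.range n, ρ ^ j = (1 - ρ ^ n) / (1 - ρ) := by
    rw [geom_sum_eq h1.ne, ← neg_sub (1:ℝ) (ρ ^ n), ← neg_sub (1:ℝ) ρ, neg_div_neg_eq]
  rw [heq]
  have hpn : 0 ≤ ρ ^ n := pow_nonneg h0 n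
  gcongr
  linarith
  
/-- Second (lifted-input) regret bound of Theorem 1 for the RPL adaptive
controller: with lifted-input error magnitudes `v_i ≤ c_p‖θ̃₀‖` before `T_s` and
`v_i ≤ γ^{i−T_s+1} c_p ‖θ̃₀‖` after, and an `L_c`-Lipschitz stage cost,
`R_T ≤ c_w c_p L_c ‖θ̃₀‖ [T_s/(1−ρ) + (ρ^T + (1−γ)ρ + γ)/((1−ρ)²(1−γ))]`. -/
theorem rpl_lifted_regret_bound
    (n : ℕ) (cw cp Lc : ℝ) (hcw : 0 < cw) (hcp : 0 < cp) (hLc : 0 < Lc)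
    (ρ γ : ℝ) (hρ0 : 0 < ρ) (hρ1 : ρ < 1) (hγ0 : 0 < γ) (hγ1 : γ < 1)
    (Ts T : ℕ) (hTs : 1 ≤ Ts) (hT : Ts < T)
    (t0 : ℝ) (ht0 : 0 ≤ t0)
    (x xs : ℕ → EuclideanSpace ℝ (Fin n)) (hx0 : x 0 = xs 0)
    (v : ℕ → ℝ) (hv : ∀ i, 0 ≤ v i)
    (hISS : ∀ k, 1 ≤ k → ‖x k - xs k‖ ≤
      cw * ∑ i ∈ Finset.range k, ρ ^ (k - i - 1) * v i)
    (hvpre : ∀ i, i < Ts → v i ≤ cp * t0)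
    (hvpost : ∀ i, Ts ≤ i → v i ≤ γ ^ (i - Ts + 1) * cp * t0)
    (c : EuclideanSpace ℝ (Fin n) → ℝ)
    (hc : ∀ y z : EuclideanSpace ℝ (Fin n), |c y - c z| ≤ Lc * ‖y - z‖) :
    ∑ k ∈ Finset.range T, (c (x k) - c (xs k)) ≤
      cw * cp * Lc * t0 *
        ((Ts : ℝ) / (1 - ρ) +
          (ρ ^ T + (1 - γ) * ρ + γ) / ((1 - ρ) ^ 2 * (1 - γ))) := by
  have hρ' : (0:ℝ) < 1 - ρ := by linarith
  have hγ' : (0:ℝ) < 1 - γ := by linarith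
  -- norm bound for all k (including k = 0)
  have hnorm : ∀ k, ‖x k - xs k‖ ≤
      cw * ∑ i ∈ Finset.range k, ρ ^ (k - i - 1) * v i := by
    intro k
    rcases Nat.eq_zero_or_pos k with rfl | hk
    · simp [hx0]
    · exact hISS k hk
  -- stage cost bound
  have hstage : ∀ k, c (x k) - c (xs k) ≤
      Lc * (cw * ∑ i ∈ Finset.range k, ρ ^ (k - i - 1) * v i) := by
    intro k
    calc c (x k) - c (xs k) ≤ |c (x k) - c (xs k)| := le_abs_self _
      _ ≤ Lc * ‖x k - xs k‖ := hc _ _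
      _ ≤ Lc * (cw * ∑ i ∈ Finset.range k, ρ ^ (k - i - 1) * v i) := by
          exact mul_le_mul_of_nonneg_left (hnorm k) hLc.le
  -- double sum
  have hD : ∑ k ∈ Finset.range T, ∑ i ∈ Finset.range k, ρ ^ (k - i - 1) * v i
      ≤ (∑ i ∈ Finset.range T, v i) * (1 / (1 - ρ)) := by
    have hswap : ∑ k ∈ Finset.range T, ∑ i ∈ Finset.range k, ρ ^ (k - i - 1) * v i
        = ∑ i ∈ Finset.range T, ∑ k ∈ Finset.Ico (i + 1) T, ρ ^ (k - i - 1) * v i := by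
      simpa using (Finset.sum_Ico_Ico_comm' 0 T fun i k => ρ ^ (k - i - 1) * v i).symm
    rw [hswap, Finset.sum_mul]
    apply Finset.sum_le_sum
    intro i _
    have : ∑ k ∈ Finset.Ico (i + 1) T, ρ ^ (k - i - 1) * v i
        = (∑ j ∈ Finset.range (T - (i + 1)), ρ ^ j) * v i := by
      rw [Finset.sum_Ico_eq_sum_range, Finset.sum_mul]
      apply Finset.sum_congr rfl
      intro j _
      congr 2
      omega
    rw [this, mul_comm (v i)]
    exact mul_le_mul_of_nonneg_right (rpl_geom_sum_le hρ0.le hρ1 _) (hv i)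
  -- sum of v
  have hvsum : ∑ i ∈ Finset.range T, v i ≤ cp * t0 * ((Ts : ℝ) + γ / (1 - γ)) := by
    rw [← Finset.sum_range_add_sum_Ico v hT.le]
    have h1 : ∑ i ∈ Finset.range Ts, v i ≤ (Ts : ℝ) * (cp * t0) := by
      calc ∑ i ∈ Finset.range Ts, v i ≤ ∑ i ∈ Finset.range Ts, cp * t0 :=
            Finset.sum_le_sum fun i hi => hvpre i (Finset.mem_range.mp hi)
        _ = (Ts : ℝ) * (cp * t0) := by simp [mul_comm]
    have h2 : ∑ i ∈ Finset.Ico Ts T, v i ≤ cp * t0 * (γ / (1 - γ)) := by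
      calc ∑ i ∈ Finset.Ico Ts T, v i
          ≤ ∑ i ∈ Finset.Ico Ts T, γ ^ (i - Ts + 1) * cp * t0 :=
            Finset.sum_le_sum fun i hi => hvpost i (Finset.mem_Ico.mp hi).1
        _ = (∑ j ∈ Finset.range (T - Ts), γ ^ (j + 1)) * (cp * t0) := by
            rw [Finset.sum_Ico_eq_sum_range, Finset.sum_mul]
            apply Finset.sum_congr rfl
            intro j _
            have : Ts + j - Ts + 1 = j + 1 := by omega
            rw [this]; ring
        _ = (γ * ∑ j ∈ Finset.range (T - Ts), γ ^ j) * (cp * t0) := by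
            rw [Finset.mul_sum]
            congr 1
            apply Finset.sum_congr rfl
            intro j _; ring
        _ ≤ (γ * (1 / (1 - γ))) * (cp * t0) := by
            apply mul_le_mul_of_nonneg_right _ (by positivity)
            exact mul_le_mul_of_nonneg_left (rpl_geom_sum_le hγ0.le hγ1 _) hγ0.le
        _ = cp * t0 * (γ / (1 - γ)) := by ring
    calc ∑ i ∈ Finset.range Ts, v i + ∑ i ∈ Finset.Ico Ts T, v i
        ≤ (Ts : ℝ) * (cp * t0) + cp * t0 * (γ / (1 - γ)) := add_le_add h1 h2
      _ = cp * t0 * ((Ts : ℝ) + γ / (1 - γ)) := by ring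
  -- assemble
  have hmain : ∑ k ∈ Finset.range T, (c (x k) - c (xs k)) ≤
      Lc * cw * (cp * t0 * ((Ts : ℝ) + γ / (1 - γ)) * (1 / (1 - ρ))) := by
    calc ∑ k ∈ Finset.range T, (c (x k) - c (xs k))
        ≤ ∑ k ∈ Finset.range T, Lc * (cw * ∑ i ∈ Finset.range k, ρ ^ (k - i - 1) * v i) :=
          Finset.sum_le_sum fun k _ => hstage k
      _ = Lc * cw * ∑ k ∈ Finset.range T, ∑ i ∈ Finset.range k, ρ ^ (k - i - 1) * v i := by
          rw [Finset.mul_sum]; apply Finset.sum_congr rfl; intro k _; ring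
      _ ≤ Lc * cw * ((∑ i ∈ Finset.range T, v i) * (1 / (1 - ρ))) := by
          apply mul_le_mul_of_nonneg_left hD (by positivity)
      _ ≤ Lc * cw * (cp * t0 * ((Ts : ℝ) + γ / (1 - γ)) * (1 / (1 - ρ))) := by
          apply mul_le_mul_of_nonneg_left _ (by positivity)
          exact mul_le_mul_of_nonneg_right hvsum (by positivity)
  refine hmain.trans ?_
  -- final algebraic comparison
  have hkey : γ / ((1 - γ) * (1 - ρ)) ≤
      (ρ ^ T + (1 - γ) * ρ + γ) / ((1 - ρ) ^ 2 * (1 - γ)) := by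
    rw [div_le_div_iff₀ (by positivity) (by positivity)]
    have hpT : 0 ≤ ρ ^ T := pow_nonneg hρ0.le T
    nlinarith [mul_pos hγ' hρ', sq_nonneg (1 - ρ)]
  have hTs0 : (0:ℝ) ≤ (Ts : ℝ) := Nat.cast_nonneg _
  have : Lc * cw * (cp * t0 * ((Ts : ℝ) + γ / (1 - γ)) * (1 / (1 - ρ)))
      = cw * cp * Lc * t0 * ((Ts : ℝ) / (1 - ρ) + γ / ((1 - γ) * (1 - ρ))) := by
    field_simp
  rw [this]
  apply mul_le_mul_of_nonneg_left _ (by positivity)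
  exact add_le_add_right hkey _
end

section
/- Let c_w, b, L_c, c_r > 0, ρ, λ ∈ (0,1), T_s, T ∈ ℕ with 1 ≤ T_s < T. Let x, x* : ℕ → ℝ^n with x₀ = x*₀ satisfy ‖x_k − x*_k‖ ≤ c_w Σ_{i=0}^{k-1} ρ^{k-i-1} b‖θ̃_i‖ for all k ≥ 1, where θ̃ : ℕ → ℝ^p satisfies ‖θ̃_i‖ ≤ ‖θ̃₀‖ for all i < T_s and ‖θ̃_i‖ ≤ c_r λ^{i−T_s}‖θ̃₀‖ for all i ≥ T_s, and let c : ℝ^n → ℝ satisfy |c(x) − c(y)| ≤ L_c‖x − y‖ for all x, y. Then the regret R_T := Σ_{k=0}^{T-1} (c(x_k) − c(x*_k)) satisfies R_T ≤ c_w b L_c ‖θ̃₀‖ [ T_s/(1−ρ) + c_r(ρ^T + 1) / ((1−ρ)²(1−λ)) ]. -/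
private lemma geom_aux {q : ℝ} (hq0 : 0 < q) (hq1 : q < 1) (N : ℕ) :
    ∑ j ∈ Finset.range N, q ^ j ≤ 1 / (1 - q) := by
  have h1 : (0:ℝ) < 1 - q := by linarith
  have hne : q - 1 ≠ 0 := sub_ne_zero.mpr hq1.ne
  have hne2 : (1:ℝ) - q ≠ 0 := h1.ne'
  rw [geom_sum_eq hq1.ne]
  have heq : (q ^ N - 1) / (q - 1) = (1 - q ^ N) / (1 - q) := by
    field_simp
    ring
  rw [heq, div_le_div_iff₀ h1 h1]
  nlinarith [mul_nonneg (pow_nonneg hq0.le N) h1.le]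

/-- Regret bound of Theorem 2 for the RLSFF adaptive controller: under the
E-δISS deviation bound with disturbance magnitudes `b‖θ̃_i‖`, parameter errors
nonexpansive before `T_s` and satisfying `‖θ̃_i‖ ≤ c_r λ^{i−T_s}‖θ̃₀‖` afterwards, and an
`L_c`-Lipschitz stage cost, the regret satisfies
`R_T ≤ c_w b L_c ‖θ̃₀‖ [T_s/(1−ρ) + c_r(ρ^T + 1)/((1−ρ)²(1−λ))]`. -/
theorem rlsff_regret_bound
    (n p : ℕ) (cw b Lc cr : ℝ) (hcw : 0 < cw) (hb : 0 < b) (hLc : 0 < Lc) (hcr : 0 < cr)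
    (ρ lam : ℝ) (hρ0 : 0 < ρ) (hρ1 : ρ < 1) (hlam0 : 0 < lam) (hlam1 : lam < 1)
    (Ts T : ℕ) (hTs : 1 ≤ Ts) (hT : Ts < T)
    (x xs : ℕ → EuclideanSpace ℝ (Fin n)) (hx0 : x 0 = xs 0)
    (θt : ℕ → EuclideanSpace ℝ (Fin p))
    (hISS : ∀ k, 1 ≤ k → ‖x k - xs k‖ ≤
      cw * ∑ i ∈ Finset.range k, ρ ^ (k - i - 1) * (b * ‖θt i‖))
    (hθpre : ∀ i, i < Ts → ‖θt i‖ ≤ ‖θt 0‖)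
    (hθpost : ∀ i, Ts ≤ i → ‖θt i‖ ≤ cr * lam ^ (i - Ts) * ‖θt 0‖)
    (c : EuclideanSpace ℝ (Fin n) → ℝ)
    (hc : ∀ y z : EuclideanSpace ℝ (Fin n), |c y - c z| ≤ Lc * ‖y - z‖) :
    ∑ k ∈ Finset.range T, (c (x k) - c (xs k)) ≤
      cw * b * Lc * ‖θt 0‖ *
        ((Ts : ℝ) / (1 - ρ) + cr * (ρ ^ T + 1) / ((1 - ρ) ^ 2 * (1 - lam))) := by
  have hρ1' : (0:ℝ) < 1 - ρ := by linarith
  have hlam1' : (0:ℝ) < 1 - lam := by linarith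
  have hθ0 : 0 ≤ ‖θt 0‖ := norm_nonneg _
  -- step 1: the ISS bound holds for all k (including k = 0)
  have hISS' : ∀ k, ‖x k - xs k‖ ≤
      cw * ∑ i ∈ Finset.range k, ρ ^ (k - i - 1) * (b * ‖θt i‖) := by
    intro k
    rcases Nat.eq_zero_or_pos k with rfl | hk
    · simp [hx0]
    · exact hISS k hk
  -- step 2: bound the regret by Lc times the sum of deviations
  have step1 : ∑ k ∈ Finset.range T, (c (x k) - c (xs k)) ≤
      Lc * cw * ∑ k ∈ Finset.range T,
        ∑ i ∈ Finset.range k, ρ ^ (k - i - 1) * (b * ‖θt i‖) := by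
    rw [Finset.mul_sum]
    refine Finset.sum_le_sum fun k _ => ?_
    have h1 : c (x k) - c (xs k) ≤ Lc * ‖x k - xs k‖ :=
      (le_abs_self _).trans (hc _ _)
    have h2 := hISS' k
    calc c (x k) - c (xs k) ≤ Lc * ‖x k - xs k‖ := h1
      _ ≤ Lc * (cw * ∑ i ∈ Finset.range k, ρ ^ (k - i - 1) * (b * ‖θt i‖)) :=
          mul_le_mul_of_nonneg_left h2 hLc.le
      _ = Lc * cw * ∑ i ∈ Finset.range k, ρ ^ (k - i - 1) * (b * ‖θt i‖) := by ring
  -- step 3: swap the double sum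
  have swap : ∑ k ∈ Finset.range T, ∑ i ∈ Finset.range k, ρ ^ (k - i - 1) * (b * ‖θt i‖)
      = ∑ i ∈ Finset.range T, ∑ k ∈ Finset.Ico (i+1) T, ρ ^ (k - i - 1) * (b * ‖θt i‖) := by
    have h := Finset.sum_Ico_Ico_comm' 0 T (fun i k => ρ ^ (k - i - 1) * (b * ‖θt i‖))
    simp only [Finset.range_eq_Ico]
    exact h.symm
  -- step 4: geometric bound on each inner sum
  have inner : ∀ i ∈ Finset.range T,
      ∑ k ∈ Finset.Ico (i+1) T, ρ ^ (k - i - 1) * (b * ‖θt i‖)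
        ≤ (1 / (1 - ρ)) * (b * ‖θt i‖) := by
    intro i _
    have hnn : 0 ≤ b * ‖θt i‖ := mul_nonneg hb.le (norm_nonneg _)
    rw [← Finset.sum_mul]
    refine mul_le_mul_of_nonneg_right ?_ hnn
    have hre : ∑ k ∈ Finset.Ico (i+1) T, ρ ^ (k - i - 1)
        = ∑ j ∈ Finset.range (T - (i+1)), ρ ^ j := by
      rw [Finset.sum_Ico_eq_sum_range]
      refine Finset.sum_congr rfl fun j _ => ?_
      congr 1
      omega
    rw [hre]
    exact geom_aux hρ0 hρ1 _
  -- step 5: sum of parameter-error norms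
  have sumθ : ∑ i ∈ Finset.range T, ‖θt i‖ ≤ (Ts : ℝ) * ‖θt 0‖ + cr * ‖θt 0‖ / (1 - lam) := by
    have hsplit : Finset.range T = Finset.range Ts ∪ Finset.Ico Ts T := by
      ext a
      simp only [Finset.mem_union, Finset.mem_range, Finset.mem_Ico]
      omega
    rw [hsplit, Finset.sum_union (by
      rw [Finset.range_eq_Ico]
      exact Finset.Ico_disjoint_Ico_consecutive 0 Ts T)]
    have h1 : ∑ i ∈ Finset.range Ts, ‖θt i‖ ≤ (Ts : ℝ) * ‖θt 0‖ := by
      calc ∑ i ∈ Finset.range Ts, ‖θt i‖ ≤ ∑ _i ∈ Finset.range Ts, ‖θt 0‖ :=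
            Finset.sum_le_sum fun i hi => hθpre i (Finset.mem_range.mp hi)
        _ = (Ts : ℝ) * ‖θt 0‖ := by simp [mul_comm]
    have h2 : ∑ i ∈ Finset.Ico Ts T, ‖θt i‖ ≤ cr * ‖θt 0‖ / (1 - lam) := by
      calc ∑ i ∈ Finset.Ico Ts T, ‖θt i‖
          ≤ ∑ i ∈ Finset.Ico Ts T, cr * lam ^ (i - Ts) * ‖θt 0‖ :=
            Finset.sum_le_sum fun i hi => hθpost i (Finset.mem_Ico.mp hi).1
        _ = cr * ‖θt 0‖ * ∑ j ∈ Finset.range (T - Ts), lam ^ j := by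
            rw [Finset.mul_sum, Finset.sum_Ico_eq_sum_range]
            refine Finset.sum_congr rfl fun j _ => ?_
            have : Ts + j - Ts = j := by omega
            rw [this]; ring
        _ ≤ cr * ‖θt 0‖ * (1 / (1 - lam)) := by
            exact mul_le_mul_of_nonneg_left (geom_aux hlam0 hlam1 _)
              (mul_nonneg hcr.le hθ0)
        _ = cr * ‖θt 0‖ / (1 - lam) := by ring
    linarith
  -- combine
  have step2 : ∑ k ∈ Finset.range T, ∑ i ∈ Finset.range k, ρ ^ (k - i - 1) * (b * ‖θt i‖)
      ≤ (1 / (1 - ρ)) * b * ((Ts : ℝ) * ‖θt 0‖ + cr * ‖θt 0‖ / (1 - lam)) := by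
    rw [swap]
    calc ∑ i ∈ Finset.range T, ∑ k ∈ Finset.Ico (i+1) T, ρ ^ (k - i - 1) * (b * ‖θt i‖)
        ≤ ∑ i ∈ Finset.range T, (1 / (1 - ρ)) * (b * ‖θt i‖) := Finset.sum_le_sum inner
      _ = (1 / (1 - ρ)) * b * ∑ i ∈ Finset.range T, ‖θt i‖ := by
          rw [Finset.mul_sum]; refine Finset.sum_congr rfl fun i _ => by ring
      _ ≤ (1 / (1 - ρ)) * b * ((Ts : ℝ) * ‖θt 0‖ + cr * ‖θt 0‖ / (1 - lam)) := by
          refine mul_le_mul_of_nonneg_left sumθ ?_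
          positivity
  have main : ∑ k ∈ Finset.range T, (c (x k) - c (xs k)) ≤
      cw * b * Lc * ‖θt 0‖ * ((Ts : ℝ) / (1 - ρ) + cr / ((1 - ρ) * (1 - lam))) := by
    refine step1.trans ?_
    have := mul_le_mul_of_nonneg_left step2 (mul_nonneg hLc.le hcw.le)
    refine this.trans_eq ?_
    field_simp
  refine main.trans ?_
  refine mul_le_mul_of_nonneg_left ?_ (by positivity)
  have key : cr / ((1 - ρ) * (1 - lam)) ≤ cr * (ρ ^ T + 1) / ((1 - ρ) ^ 2 * (1 - lam)) := by
    rw [div_le_div_iff₀ (by positivity) (by positivity)]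
    have hpow : 0 ≤ ρ ^ T := pow_nonneg hρ0.le _
    have h1 : (1 - ρ) ≤ ρ ^ T + 1 := by linarith
    calc cr * ((1 - ρ) ^ 2 * (1 - lam)) = cr * (1 - ρ) * (1 - lam) * (1 - ρ) := by ring
      _ ≤ cr * (1 - ρ) * (1 - lam) * (ρ ^ T + 1) :=
          mul_le_mul_of_nonneg_left h1 (by positivity)
      _ = cr * (ρ ^ T + 1) * ((1 - ρ) * (1 - lam)) := by ring
  linarith
end
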